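/- arXiv:2004.10450 — 3 statements merged into one kernel-verified Lean document; each statement's English description precedes it below -/
import Mathlib

section
/- Fix τ ∈ (0,1). For the distribution p on leaves {(A,1),(A,2),(B,1),(B,2)} with p(A,1)=0.1, p(A,2)=0.4, p(B,1)=0.25, p(B,2)=0.25, there exist no local temperatures t₀, t_A, t_B > 0 such that factorized local temperature sampling — first-step probabilities proportional to (1/2)^{1/t₀} for each branch, then conditional leaf probabilities proportional to the conditional probabilities raised to 1/t_A (resp. 1/t_B) — equals the globally tempered distribution proportional to p(x)^{1/τ}, when τ = 1/2. -/
/-! Both first-step weights are `(1/2)^(1/t₀)`, and both conditional weights under `B` are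
`(1/2)^(1/t_B)`, so whatever the temperatures, local sampling gives each leaf under `B`
probability `1/2 · 1/2 = 1/4`. Global tempering gives it `0.25² / 0.295 ≠ 1/4`. -/

theorem div_add_self_eq_half {K : Type*} [Field K] [NeZero (2 : K)] {x : K} (hx : x ≠ 0) :
    x / (x + x) = 1 / 2 := by
  rw [← two_mul, div_mul_cancel_right₀ hx, one_div]

theorem rpow_div_rpow_add_rpow_self {a : ℝ} (ha : 0 < a) (s : ℝ) :
    a ^ s / (a ^ s + a ^ s) = 1 / 2 :=
  div_add_self_eq_half (Real.rpow_pos_of_pos ha s).ne'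

/-- For the two-step distribution with joint leaf probabilities
`p(A,1)=0.1, p(A,2)=0.4, p(B,1)=0.25, p(B,2)=0.25` (branch probabilities
`(1/2,1/2)`, conditionals `(0.2,0.8)` under `A` and `(0.5,0.5)` under `B`),
no local temperatures `t₀, t_A, t_B > 0` make factorized local temperature
sampling equal to the globally tempered distribution with `τ = 1/2`
(probabilities proportional to the squared joint probabilities). -/
theorem no_local_temperatures_match_global :
    ¬ ∃ t₀ tA tB : ℝ, 0 < t₀ ∧ 0 < tA ∧ 0 < tB ∧
      -- leaf (A,1)
      ((1 / 2 : ℝ) ^ (1 / t₀) / ((1 / 2 : ℝ) ^ (1 / t₀) + (1 / 2 : ℝ) ^ (1 / t₀))) *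
        ((0.2 : ℝ) ^ (1 / tA) / ((0.2 : ℝ) ^ (1 / tA) + (0.8 : ℝ) ^ (1 / tA)))
        = (0.1 : ℝ) ^ (2 : ℕ) / ((0.1 : ℝ) ^ (2 : ℕ) + (0.4 : ℝ) ^ (2 : ℕ)
            + (0.25 : ℝ) ^ (2 : ℕ) + (0.25 : ℝ) ^ (2 : ℕ)) ∧
      -- leaf (A,2)
      ((1 / 2 : ℝ) ^ (1 / t₀) / ((1 / 2 : ℝ) ^ (1 / t₀) + (1 / 2 : ℝ) ^ (1 / t₀))) *
        ((0.8 : ℝ) ^ (1 / tA) / ((0.2 : ℝ) ^ (1 / tA) + (0.8 : ℝ) ^ (1 / tA)))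
        = (0.4 : ℝ) ^ (2 : ℕ) / ((0.1 : ℝ) ^ (2 : ℕ) + (0.4 : ℝ) ^ (2 : ℕ)
            + (0.25 : ℝ) ^ (2 : ℕ) + (0.25 : ℝ) ^ (2 : ℕ)) ∧
      -- leaf (B,1)
      ((1 / 2 : ℝ) ^ (1 / t₀) / ((1 / 2 : ℝ) ^ (1 / t₀) + (1 / 2 : ℝ) ^ (1 / t₀))) *
        ((0.5 : ℝ) ^ (1 / tB) / ((0.5 : ℝ) ^ (1 / tB) + (0.5 : ℝ) ^ (1 / tB)))
        = (0.25 : ℝ) ^ (2 : ℕ) / ((0.1 : ℝ) ^ (2 : ℕ) + (0.4 : ℝ) ^ (2 : ℕ)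
            + (0.25 : ℝ) ^ (2 : ℕ) + (0.25 : ℝ) ^ (2 : ℕ)) ∧
      -- leaf (B,2)
      ((1 / 2 : ℝ) ^ (1 / t₀) / ((1 / 2 : ℝ) ^ (1 / t₀) + (1 / 2 : ℝ) ^ (1 / t₀))) *
        ((0.5 : ℝ) ^ (1 / tB) / ((0.5 : ℝ) ^ (1 / tB) + (0.5 : ℝ) ^ (1 / tB)))
        = (0.25 : ℝ) ^ (2 : ℕ) / ((0.1 : ℝ) ^ (2 : ℕ) + (0.4 : ℝ) ^ (2 : ℕ)
            + (0.25 : ℝ) ^ (2 : ℕ) + (0.25 : ℝ) ^ (2 : ℕ)) := by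
  rintro ⟨t₀, -, tB, -, -, -, -, -, hB₁, -⟩
  rw [rpow_div_rpow_add_rpow_self (by norm_num) (1 / t₀),
    rpow_div_rpow_add_rpow_self (by norm_num) (1 / tB)] at hB₁
  norm_num at hB₁
end

section
/- Let P be a probability distribution with full support on a finite set X, and τ ∈ (0,1]. Let Q_τ(x) = P(x)^{1/τ} / Σ_y P(y)^{1/τ}. Among all probability distributions Q on X with Shannon entropy H(Q) = H(Q_τ), the distribution Q_τ minimizes the reverse KL divergence D_KL(Q ‖ P). -/
/-!
Taking logarithms in `Q_τ ∝ P^(1/τ)` gives `log P = τ log Q_τ + c` with a constant `c`, so for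
every distribution `R` the reverse divergence splits as
`D(R ‖ P) = -H(R) - τ ∑ R log Q_τ - c`.
On the entropy level set `H(R) = H(Q_τ)` only the middle term varies, and since `τ ≥ 0` Gibbs'
inequality `∑ Q log Q_τ ≤ ∑ Q log Q = ∑ Q_τ log Q_τ` shows that it is smallest at `R = Q_τ`.
-/

open Real Finset

lemma mul_log_div {x y : ℝ} (hy : y ≠ 0) : x * log (x / y) = x * log x - x * log y := by
  rcases eq_or_ne x 0 with rfl | hx
  · simp
  · rw [log_div hx hy, mul_sub]

lemma sub_le_mul_log_div {x y : ℝ} (hx : 0 ≤ x) (hy : 0 < y) : x - y ≤ x * log (x / y) := by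
  have h := mul_le_mul_of_nonneg_left (self_sub_one_le_mul_log (div_nonneg hx hy.le)) hy.le
  rwa [mul_sub, mul_div_cancel₀ _ hy.ne', mul_one, ← mul_assoc, mul_div_cancel₀ _ hy.ne'] at h

section Gibbs

variable {ι : Type*} [Fintype ι]

/-- **Gibbs' inequality**. -/
theorem sum_mul_log_le_sum_mul_log {q r : ι → ℝ} (hq : ∀ i, 0 ≤ q i) (hr : ∀ i, 0 < r i)
    (hsum : ∑ i, r i ≤ ∑ i, q i) :
    ∑ i, q i * log (r i) ≤ ∑ i, q i * log (q i) := by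
  have h : ∑ i, (q i - r i) ≤ ∑ i, q i * log (q i / r i) :=
    sum_le_sum fun i _ => sub_le_mul_log_div (hq i) (hr i)
  rw [sum_sub_distrib, sum_congr rfl fun i _ => mul_log_div (hr i).ne', sum_sub_distrib] at h
  linarith

lemma sum_mul_log_div_of_log_eq {p s r : ι → ℝ} {τ c : ℝ} (hp : ∀ i, p i ≠ 0)
    (hlog : ∀ i, log (p i) = τ * log (s i) + c) (hr : ∑ i, r i = 1) :
    ∑ i, r i * log (r i / p i) = ∑ i, r i * log (r i) - τ * ∑ i, r i * log (s i) - c := by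
  calc ∑ i, r i * log (r i / p i)
      = ∑ i, (r i * log (r i) - τ * (r i * log (s i)) - c * r i) :=
        sum_congr rfl fun i _ => by rw [mul_log_div (hp i), hlog]; ring
    _ = ∑ i, r i * log (r i) - τ * ∑ i, r i * log (s i) - c := by
        rw [sum_sub_distrib, sum_sub_distrib, ← mul_sum, ← mul_sum, hr, mul_one]

theorem sum_mul_log_div_le_of_log_eq {p s q : ι → ℝ} {τ c : ℝ} (hp : ∀ i, p i ≠ 0) (hτ : 0 ≤ τ)
    (hlog : ∀ i, log (p i) = τ * log (s i) + c) (hs0 : ∀ i, 0 < s i) (hs : ∑ i, s i = 1)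
    (hq0 : ∀ i, 0 ≤ q i) (hq : ∑ i, q i = 1)
    (hH : ∑ i, q i * log (q i) = ∑ i, s i * log (s i)) :
    ∑ i, s i * log (s i / p i) ≤ ∑ i, q i * log (q i / p i) := by
  have hcross : ∑ i, q i * log (s i) ≤ ∑ i, s i * log (s i) :=
    hH ▸ sum_mul_log_le_sum_mul_log hq0 hs0 (hs.trans hq.symm).le
  rw [sum_mul_log_div_of_log_eq hp hlog hs, sum_mul_log_div_of_log_eq hp hlog hq, hH]
  linarith [mul_le_mul_of_nonneg_left hcross hτ]

end Gibbs

section Tempered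

variable {X : Type*} [Fintype X]

noncomputable def temperedDist (P : X → ℝ) (τ : ℝ) (x : X) : ℝ :=
  P x ^ (1 / τ) / ∑ y, P y ^ (1 / τ)

variable [Nonempty X] {P : X → ℝ}

lemma sum_rpow_pos (hP : ∀ x, 0 < P x) (a : ℝ) : 0 < ∑ y, P y ^ a :=
  sum_pos (fun y _ => rpow_pos_of_pos (hP y) a) univ_nonempty

lemma temperedDist_pos (hP : ∀ x, 0 < P x) (τ : ℝ) (x : X) : 0 < temperedDist P τ x :=
  div_pos (rpow_pos_of_pos (hP x) _) (sum_rpow_pos hP _)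

lemma sum_temperedDist (hP : ∀ x, 0 < P x) (τ : ℝ) : ∑ x, temperedDist P τ x = 1 := by
  simp only [temperedDist]
  rw [← sum_div, div_self (sum_rpow_pos hP _).ne']

lemma log_eq_mul_log_temperedDist_add (hP : ∀ x, 0 < P x) {τ : ℝ} (hτ : τ ≠ 0) (x : X) :
    log (P x) = τ * log (temperedDist P τ x) + τ * log (∑ y, P y ^ (1 / τ)) := by
  rw [temperedDist, log_div (rpow_pos_of_pos (hP x) _).ne' (sum_rpow_pos hP _).ne',
    log_rpow (hP x)]
  field_simp
  ring

end Tempered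

theorem tempered_minimizes_reverse_kl_general
    {X : Type*} [Fintype X] [Nonempty X]
    (P : X → ℝ) (hPpos : ∀ x, 0 < P x)
    (τ : ℝ) (hτ0 : 0 < τ)
    (Qτ : X → ℝ) (hQτ : ∀ x, Qτ x = P x ^ (1 / τ) / ∑ y, P y ^ (1 / τ))
    (Q : X → ℝ) (hQ0 : ∀ x, 0 ≤ Q x) (hQsum : ∑ x, Q x = 1)
    (hH : -∑ x, Q x * Real.log (Q x) = -∑ x, Qτ x * Real.log (Qτ x)) :
    ∑ x, Qτ x * Real.log (Qτ x / P x) ≤ ∑ x, Q x * Real.log (Q x / P x) := by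
  obtain rfl : Qτ = temperedDist P τ := funext hQτ
  exact sum_mul_log_div_le_of_log_eq (fun x => (hPpos x).ne') hτ0.le
    (log_eq_mul_log_temperedDist_add hPpos hτ0.ne') (temperedDist_pos hPpos τ)
    (sum_temperedDist hPpos τ) hQ0 hQsum (neg_inj.mp hH)

/-- Proposition 1: Among all probability distributions `Q` on a
finite set `X` with Shannon entropy equal to that of the tempered distribution
`Q_τ(x) = P(x)^(1/τ) / ∑ y, P(y)^(1/τ)` (for `P` of full support, `τ ∈ (0,1]`),
the distribution `Q_τ` minimizes the reverse KL divergence `D_KL(Q ‖ P)`. -/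
theorem tempered_minimizes_reverse_kl
    {X : Type*} [Fintype X] [Nonempty X]
    (P : X → ℝ) (hPpos : ∀ x, 0 < P x) (hPsum : ∑ x, P x = 1)
    (τ : ℝ) (hτ0 : 0 < τ) (hτ1 : τ ≤ 1)
    (Qτ : X → ℝ) (hQτ : ∀ x, Qτ x = P x ^ (1 / τ) / ∑ y, P y ^ (1 / τ))
    (Q : X → ℝ) (hQ0 : ∀ x, 0 ≤ Q x) (hQsum : ∑ x, Q x = 1)
    (hH : -∑ x, Q x * Real.log (Q x) = -∑ x, Qτ x * Real.log (Qτ x)) :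
    ∑ x, Qτ x * Real.log (Qτ x / P x) ≤ ∑ x, Q x * Real.log (Q x / P x) :=
  tempered_minimizes_reverse_kl_general P hPpos τ hτ0 Qτ hQτ Q hQ0 hQsum hH
end

section
/- Let P be a probability distribution with full support on a finite set X, and let Q_τ(x) ∝ P(x)^{1/τ} for τ > 0. Then the map τ ↦ H(Q_τ) is monotone: for 0 < τ₁ ≤ τ₂, H(Q_{τ₁}) ≤ H(Q_{τ₂}) whenever τ₂ ≤ 1 (entropy is nondecreasing in temperature on (0,1]). -/
/-!
Writing `P(x)^(1/τ) = exp (β log P(x))` with `β = 1/τ`, the tempered distributions form the Gibbs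
family `q_β ∝ exp (β f)` of `f = log P`. With `Z` the partition function and `M(β) = E_{q_β}[f]`,
`H(q_β) = log Z(β) - β M(β)` and `KL(q_a ‖ q_b) = (a - b) M(a) - log Z(a) + log Z(b)`.
Nonnegativity of both divergences between `q_a` and `q_b` gives that `M` is monotone; the one from
`q_a` to `q_b` then yields `H(q_a) ≤ log Z(b) - b M(a) ≤ H(q_b)` for `0 ≤ b ≤ a`.
-/

open Real Finset

theorem sum_mul_log_sub_log_le {X : Type*} [Fintype X] (q r : X → ℝ)
    (hq : ∀ x, 0 < q x) (hr : ∀ x, 0 < r x) :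
    ∑ x, q x * (log (r x) - log (q x)) ≤ ∑ x, r x - ∑ x, q x := by
  rw [← sum_sub_distrib]
  refine sum_le_sum fun x _ => ?_
  calc q x * (log (r x) - log (q x)) = q x * log (r x / q x) := by
        rw [log_div (hr x).ne' (hq x).ne']
    _ ≤ q x * (r x / q x - 1) :=
        mul_le_mul_of_nonneg_left (log_le_sub_one_of_pos (div_pos (hr x) (hq x))) (hq x).le
    _ = r x - q x := by field_simp [(hq x).ne']

noncomputable def shannonEntropy {X : Type*} [Fintype X] (q : X → ℝ) : ℝ :=
  -∑ x, q x * log (q x)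

section Gibbs

variable {X : Type*} [Fintype X] (f : X → ℝ)

noncomputable def partitionFunction (β : ℝ) : ℝ := ∑ x, exp (β * f x)

noncomputable def gibbs (β : ℝ) (x : X) : ℝ := exp (β * f x) / partitionFunction f β

noncomputable def gibbsMean (β : ℝ) : ℝ := ∑ x, gibbs f β x * f x

variable [Nonempty X]

theorem partitionFunction_pos (β : ℝ) : 0 < partitionFunction f β :=
  sum_pos (fun _ _ => exp_pos _) univ_nonempty

theorem gibbs_pos (β : ℝ) (x : X) : 0 < gibbs f β x :=
  div_pos (exp_pos _) (partitionFunction_pos f β)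

theorem sum_gibbs (β : ℝ) : ∑ x, gibbs f β x = 1 := by
  unfold gibbs
  rw [← sum_div]
  exact div_self (partitionFunction_pos f β).ne'

theorem log_gibbs (β : ℝ) (x : X) :
    log (gibbs f β x) = β * f x - log (partitionFunction f β) := by
  rw [gibbs, log_div (exp_pos _).ne' (partitionFunction_pos f β).ne', log_exp]

theorem sum_gibbs_mul_affine (β c d : ℝ) :
    ∑ x, gibbs f β x * (c * f x + d) = c * gibbsMean f β + d := by
  simp only [mul_add, sum_add_distrib, ← sum_mul, sum_gibbs, one_mul, gibbsMean, mul_sum]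
  congr 1
  exact sum_congr rfl fun x _ => by ring

theorem shannonEntropy_gibbs (β : ℝ) :
    shannonEntropy (gibbs f β) = log (partitionFunction f β) - β * gibbsMean f β := by
  have h := sum_gibbs_mul_affine f β β (-log (partitionFunction f β))
  simp only [← sub_eq_add_neg, ← log_gibbs] at h
  rw [shannonEntropy, h]
  ring

theorem sum_gibbs_mul_log_gibbs_sub_log_gibbs (a b : ℝ) :
    ∑ x, gibbs f a x * (log (gibbs f b x) - log (gibbs f a x)) =
      (b - a) * gibbsMean f a + (log (partitionFunction f a) - log (partitionFunction f b)) := by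
  rw [← sum_gibbs_mul_affine]
  refine sum_congr rfl fun x _ => ?_
  rw [log_gibbs, log_gibbs]
  ring

theorem log_partitionFunction_sub_le (a b : ℝ) :
    log (partitionFunction f a) - log (partitionFunction f b) ≤ (a - b) * gibbsMean f a := by
  have hkl := sum_mul_log_sub_log_le (gibbs f a) (gibbs f b) (gibbs_pos f a) (gibbs_pos f b)
  rw [sum_gibbs_mul_log_gibbs_sub_log_gibbs, sum_gibbs, sum_gibbs] at hkl
  linarith

theorem gibbsMean_monotone : Monotone (gibbsMean f) := by
  intro b a hba
  rcases hba.eq_or_lt with rfl | hlt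
  · rfl
  have hkl_ab := log_partitionFunction_sub_le f a b
  have hkl_ba := log_partitionFunction_sub_le f b a
  have hprod : 0 ≤ (a - b) * (gibbsMean f a - gibbsMean f b) := by nlinarith
  exact sub_nonneg.mp (nonneg_of_mul_nonneg_right hprod (sub_pos.mpr hlt))

theorem shannonEntropy_gibbs_antitoneOn :
    AntitoneOn (fun β => shannonEntropy (gibbs f β)) (Set.Ici 0) := by
  intro b hb a _ hba
  simp only [shannonEntropy_gibbs]
  have hlogZ := log_partitionFunction_sub_le f a b
  have hmean := mul_le_mul_of_nonneg_left (gibbsMean_monotone f hba) (Set.mem_Ici.mp hb)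
  linarith

end Gibbs

theorem tempered_entropy_monotone_general
    {X : Type*} [Fintype X] [Nonempty X]
    (P : X → ℝ) (hPpos : ∀ x, 0 < P x)
    (Q : ℝ → X → ℝ)
    (hQ : ∀ τ x, Q τ x = P x ^ (1 / τ) / ∑ y, P y ^ (1 / τ))
    (τ₁ τ₂ : ℝ) (h1 : 0 < τ₁) (h12 : τ₁ ≤ τ₂) :
    -∑ x, Q τ₁ x * Real.log (Q τ₁ x) ≤ -∑ x, Q τ₂ x * Real.log (Q τ₂ x) := by
  have hQ_gibbs : ∀ τ, Q τ = gibbs (fun x => log (P x)) (1 / τ) := fun τ => by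
    ext x
    simp only [hQ, gibbs, partitionFunction, rpow_def_of_pos (hPpos _), mul_comm]
  have hτ₂ : 0 < τ₂ := h1.trans_le h12
  simpa only [shannonEntropy, hQ_gibbs] using
    shannonEntropy_gibbs_antitoneOn (fun x => log (P x)) (Set.mem_Ici.mpr (by positivity))
      (Set.mem_Ici.mpr (by positivity)) (one_div_le_one_div_of_le h1 h12)

/-- The Shannon entropy of the tempered distribution
`Q_τ(x) ∝ P(x)^(1/τ)` is nondecreasing in the temperature on `(0,1]`:
for `0 < τ₁ ≤ τ₂ ≤ 1`, `H(Q_{τ₁}) ≤ H(Q_{τ₂})`. -/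
theorem tempered_entropy_monotone
    {X : Type*} [Fintype X] [Nonempty X]
    (P : X → ℝ) (hPpos : ∀ x, 0 < P x) (hPsum : ∑ x, P x = 1)
    (Q : ℝ → X → ℝ)
    (hQ : ∀ τ x, Q τ x = P x ^ (1 / τ) / ∑ y, P y ^ (1 / τ))
    (τ₁ τ₂ : ℝ) (h1 : 0 < τ₁) (h12 : τ₁ ≤ τ₂) (h2 : τ₂ ≤ 1) :
    -∑ x, Q τ₁ x * Real.log (Q τ₁ x) ≤ -∑ x, Q τ₂ x * Real.log (Q τ₂ x) :=
  tempered_entropy_monotone_general P hPpos Q hQ τ₁ τ₂ h1 h12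
end
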